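/- Let A be an algebra and let α, β be congruences of A. Then there is a least congruence γ of A with the property that whenever [[x,y],[u,v]] ∈ M(α,β) and (x,y) ∈ γ, then (u,v) ∈ γ; moreover this least congruence equals the commutator [α,β] defined via the term condition. -/

import Mathlib

open FirstOrder FirstOrder.Language FirstOrder.Language.Structure

/-- A congruence on an `L`-structure: an equivalence relation preserved by every
basic operation. -/
def IsCong (L : FirstOrder.Language) (A : Type*) [L.Structure A] (r : A → A → Prop) : Prop :=
  Equivalence r ∧ ∀ (n : ℕ) (f : L.Functions n) (x y : Fin n → A),
    (∀ i, r (x i) (y i)) → r (funMap f x) (funMap f y)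

/-- The congruence generated by a set of pairs: the intersection of all congruences
containing the set. -/
def cgSet (L : FirstOrder.Language) (A : Type*) [L.Structure A] (s : Set (A × A)) :
    A → A → Prop :=
  fun x y => ∀ r : A → A → Prop, IsCong L A r → (∀ p ∈ s, r p.1 p.2) → r x y

/-- `Cg^A(a,b)`: the least congruence containing `(a,b)`. -/
def cgPair (L : FirstOrder.Language) (A : Type*) [L.Structure A] (a b : A) : A → A → Prop :=
  cgSet L A {(a, b)}

/-- The term condition `C(α,β;δ)`. -/
def TermCond (L : FirstOrder.Language) (A : Type*) [L.Structure A]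
    (α β δ : A → A → Prop) : Prop :=
  ∀ (n : ℕ) (t : L.Term (Fin (n + 1))) (a a' : A), α a a' →
    ∀ u v : Fin n → A, (∀ i, β (u i) (v i)) →
      δ (t.realize (Fin.cons a u)) (t.realize (Fin.cons a v)) →
      δ (t.realize (Fin.cons a' u)) (t.realize (Fin.cons a' v))

/-- The commutator `[α,β]`: the least congruence `δ` such that `C(α,β;δ)` holds
(the intersection of all such `δ`). -/
def commut (L : FirstOrder.Language) (A : Type*) [L.Structure A] (α β : A → A → Prop) :
    A → A → Prop :=
  fun x y => ∀ δ : A → A → Prop, IsCong L A δ → TermCond L A α β δ → δ x y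

/-- An algebra is idempotent if every basic operation satisfies `f(a,…,a) = a`. -/
def IsIdem (L : FirstOrder.Language) (A : Type*) [L.Structure A] : Prop :=
  ∀ (n : ℕ) (f : L.Functions n) (a : A), funMap f (fun _ => a) = a

/-- A ternary term `d` is a difference term operation for `A` if `d(a,a,b) = b` and
`(a, d(a,b,b)) ∈ [θ,θ]` where `θ = Cg^A(a,b)`. -/
def IsDTO (L : FirstOrder.Language) (A : Type*) [L.Structure A] (d : L.Term (Fin 3)) : Prop :=
  ∀ a b : A, d.realize ![a, a, b] = b ∧
    commut L A (cgPair L A a b) (cgPair L A a b) a (d.realize ![a, b, b])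

/-- A local difference term operation for a triple `(a, b, i) ∈ A² × {0,1}`
(`i = 1` is encoded as `true`). -/
def IsLDTO (L : FirstOrder.Language) (A : Type*) [L.Structure A] (t : L.Term (Fin 3))
    (s : A × A × Bool) : Prop :=
  if s.2.2 then t.realize ![s.1, s.1, s.2.1] = s.2.1
  else commut L A (cgPair L A s.1 s.2.1) (cgPair L A s.1 s.2.1) s.1
    (t.realize ![s.1, s.2.1, s.2.1])

/-- The coordinatewise `L`-structure on a product. -/
def prodStructure (L : FirstOrder.Language) (A B : Type*) [L.Structure A] [L.Structure B] :
    L.Structure (A × B) where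
  funMap f x := (funMap f fun i => (x i).1, funMap f fun i => (x i).2)
  RelMap r x := RelMap r (fun i => (x i).1) ∧ RelMap r (fun i => (x i).2)

/-- The quotient structure on `Quotient s` induced by the structure on `A`. -/
noncomputable def quotStructure (L : FirstOrder.Language) (A : Type*) [L.Structure A] (s : Setoid A) :
    L.Structure (Quotient s) where
  funMap f x := ⟦funMap f fun i => (x i).out⟧
  RelMap r x := RelMap r fun i => (x i).out

/-- Generators of `M(α,β)`: the matrices `[[a,a],[a',a']]` with `(a,a') ∈ α` together with
the matrices `[[b,b'],[b,b']]` with `(b,b') ∈ β`; a matrix `[[x,y],[u,v]]` is encoded as its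
pair of rows `((x,y),(u,v))`. -/
def matGens (A : Type*) (α β : A → A → Prop) : Set ((A × A) × (A × A)) :=
  {m | (∃ x y, α x y ∧ m = ((x, x), (y, y))) ∨ ∃ x y, β x y ∧ m = ((x, y), (x, y))}

/-- `M(α,β)`: the subalgebra of `A⁴` (with the coordinatewise structure) generated
by `matGens A α β`. -/
def Mset (L : FirstOrder.Language) (A : Type*) [L.Structure A] (α β : A → A → Prop) :
    Set ((A × A) × (A × A)) :=
  letI : L.Structure (A × A) := prodStructure L A A
  letI : L.Structure ((A × A) × (A × A)) := prodStructure L (A × A) (A × A)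
  (Substructure.closure L (matGens A α β) : Set ((A × A) × (A × A)))

/-!
An element of `M(α,β)` is a term applied column by column to generator matrices. Switching its
`α`-columns from the top row to the bottom row one at a time shows that every congruence `δ` with
`C(α,β;δ)` is closed under `M(α,β)`. Conversely the matrices
`[[t(a,u), t(a,v)], [t(a',u), t(a',v)]]` lie in `M(α,β)`, so every `M(α,β)`-closed congruence
satisfies `C(α,β;δ)`. Hence `[α,β]`, the intersection of the congruences satisfying the term
condition, is the least `M(α,β)`-closed congruence.
-/

namespace FirstOrder.Language

theorem Substructure.mem_closure_iff_exists_fin_term {L : Language} {M : Type*} [L.Structure M]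
    {s : Set M} {x : M} :
    x ∈ Substructure.closure L s ↔
      ∃ (n : ℕ) (t : L.Term (Fin n)) (w : Fin n → M), (∀ i, w i ∈ s) ∧ t.realize w = x := by
  classical
  constructor
  · intro hx
    obtain ⟨t, rfl⟩ := Substructure.mem_closure_iff_exists_term.1 hx
    let e := t.varFinset.equivFin
    refine ⟨_, t.restrictVar e, fun k => ((e.symm k : s) : M), fun k => (e.symm k : s).2, ?_⟩
    exact Term.realize_restrictVar _ fun a => by simp
  · rintro ⟨n, t, w, hw, rfl⟩
    exact t.realize_mem w fun i => Substructure.subset_closure (hw i)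

end FirstOrder.Language

theorem realize_prodStructure {L : Language} {B C γ : Type*} [L.Structure B] [L.Structure C]
    (t : L.Term γ) (v : γ → B × C) :
    @Term.realize L (B × C) (prodStructure L B C) γ v t =
      (t.realize (Prod.fst ∘ v), t.realize (Prod.snd ∘ v)) := by
  induction t with
  | var => rfl
  | func f ts ih =>
    show (prodStructure L B C).funMap f _ = _
    simp only [Term.realize, ih]
    rfl

section

variable {L : Language} {A : Type*} [L.Structure A] {α β δ : A → A → Prop}

theorem mem_Mset_iff {x y u v : A} :
    ((x, y), (u, v)) ∈ Mset L A α β ↔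
      ∃ (n : ℕ) (t : L.Term (Fin n)) (c d c' d' : Fin n → A),
        (∀ i, ((c i, d i), (c' i, d' i)) ∈ matGens A α β) ∧
          t.realize c = x ∧ t.realize d = y ∧ t.realize c' = u ∧ t.realize d' = v := by
  let := prodStructure L A A
  let := prodStructure L (A × A) (A × A)
  have realize_eq : ∀ {n} (t : L.Term (Fin n)) (w : Fin n → (A × A) × (A × A)),
      t.realize w = ((t.realize fun i => (w i).1.1, t.realize fun i => (w i).1.2),
        (t.realize fun i => (w i).2.1, t.realize fun i => (w i).2.2)) := by
    intro n t w
    rw [realize_prodStructure, realize_prodStructure, realize_prodStructure]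
    rfl
  change _ ∈ Substructure.closure L (matGens A α β) ↔ _
  simp only [Substructure.mem_closure_iff_exists_fin_term, realize_eq, Prod.mk.injEq]
  constructor
  · rintro ⟨n, t, w, hw, h⟩
    exact ⟨n, t, _, _, _, _, hw, h.1.1, h.1.2, h.2.1, h.2.2⟩
  · rintro ⟨n, t, c, d, c', d', hcol, h⟩
    exact ⟨n, t, fun i => ((c i, d i), (c' i, d' i)), hcol, ⟨h.1, h.2.1⟩, h.2.2⟩

theorem rows_rel_of_mem_matGens (hβ : ∀ a, β a a) {m : (A × A) × (A × A)}
    (hm : m ∈ matGens A α β) : β m.1.1 m.1.2 ∧ β m.2.1 m.2.2 := by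
  rcases hm with ⟨x, y, -, rfl⟩ | ⟨x, y, hxy, rfl⟩
  exacts [⟨hβ x, hβ y⟩, ⟨hxy, hxy⟩]

theorem isCong_commut : IsCong L A (commut L A α β) :=
  ⟨⟨fun x _ hδ _ => hδ.1.refl x, fun h δ hδ htc => hδ.1.symm (h δ hδ htc),
    fun h₁ h₂ δ hδ htc => hδ.1.trans (h₁ δ hδ htc) (h₂ δ hδ htc)⟩,
    fun n f x y hxy δ hδ htc => hδ.2 n f x y fun i => hxy i δ hδ htc⟩

theorem TermCond.realize_update (htc : TermCond L A α β δ) {n : ℕ} (t : L.Term (Fin n))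
    (j : Fin n) {a a' : A} (ha : α a a') {p q : Fin n → A} (hpq : ∀ i, β (p i) (q i))
    (h : δ (t.realize (Function.update p j a)) (t.realize (Function.update q j a))) :
    δ (t.realize (Function.update p j a')) (t.realize (Function.update q j a')) := by
  let t' := t.relabel fun i => if i = j then 0 else i.succ
  have realize_t' : ∀ (x : A) (r : Fin n → A),
      t'.realize (Fin.cons x r) = t.realize (Function.update r j x) := by
    intro x r
    rw [Term.realize_relabel]
    congr 1
    funext i
    by_cases hij : i = j <;> simp [hij]
  simpa only [realize_t'] using htc n t' a a' ha p q hpq (by simpa only [realize_t'] using h)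

/-- The `α`-columns are switched one at a time; the columns not being switched are fed to the
term condition as `β`-pairs, which is where reflexivity of `β` enters. -/
theorem TermCond.realize_of_forall_mem_matGens (htc : TermCond L A α β δ) (hβ : ∀ a, β a a)
    {n : ℕ} (t : L.Term (Fin n)) {c d c' d' : Fin n → A}
    (hcol : ∀ i, ((c i, d i), (c' i, d' i)) ∈ matGens A α β)
    (h : δ (t.realize c) (t.realize d)) : δ (t.realize c') (t.realize d') := by
  classical
  suffices ∀ s : Finset (Fin n),
      δ (t.realize (s.piecewise c' c)) (t.realize (s.piecewise d' d)) by
    simpa only [Finset.piecewise_univ] using this Finset.univ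
  intro s
  induction s using Finset.induction_on with
  | empty => simpa only [Finset.piecewise_empty] using h
  | @insert j s hj ih =>
    have hpj : s.piecewise c' c j = c j := s.piecewise_eq_of_notMem _ _ hj
    have hqj : s.piecewise d' d j = d j := s.piecewise_eq_of_notMem _ _ hj
    rw [Finset.piecewise_insert, Finset.piecewise_insert]
    rcases hcol j with ⟨x, y, hxy, he⟩ | ⟨x, y, -, he⟩
    · simp only [Prod.mk.injEq] at he
      obtain ⟨⟨hc, hd⟩, hc', hd'⟩ := he
      have hpq : ∀ i, β (s.piecewise c' c i) (s.piecewise d' d i) := fun i => by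
        by_cases hi : i ∈ s
        · simpa [hi] using (rows_rel_of_mem_matGens hβ (hcol i)).2
        · simpa [hi] using (rows_rel_of_mem_matGens hβ (hcol i)).1
      rw [hc', hd']
      refine htc.realize_update t j hxy hpq ?_
      rwa [Function.update_eq_self_iff.2 (hpj.trans hc).symm,
        Function.update_eq_self_iff.2 (hqj.trans hd).symm]
    · simp only [Prod.mk.injEq] at he
      obtain ⟨⟨hc, hd⟩, hc', hd'⟩ := he
      rwa [Function.update_eq_self_iff.2 (hc'.trans (hpj.trans hc).symm),
        Function.update_eq_self_iff.2 (hd'.trans (hqj.trans hd).symm)]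

theorem TermCond.rel_of_mem_Mset (htc : TermCond L A α β δ) (hβ : ∀ a, β a a) {x y u v : A}
    (hm : ((x, y), (u, v)) ∈ Mset L A α β) (hxy : δ x y) : δ u v := by
  obtain ⟨n, t, c, d, c', d', hcol, rfl, rfl, rfl, rfl⟩ := mem_Mset_iff.1 hm
  exact htc.realize_of_forall_mem_matGens hβ t hcol hxy

theorem termCond_of_Mset_closed
    (hδ : ∀ x y u v : A, ((x, y), (u, v)) ∈ Mset L A α β → δ x y → δ u v) :
    TermCond L A α β δ := by
  intro n t a a' ha u v huv
  refine hδ _ _ _ _ (mem_Mset_iff.2 ⟨_, t, _, _, _, _, fun i => ?_, rfl, rfl, rfl, rfl⟩)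
  refine Fin.cases ?_ (fun i => ?_) i
  exacts [Or.inl ⟨a, a', ha, rfl⟩, Or.inr ⟨u i, v i, huv i, rfl⟩]

end

theorem stmt10_general {L : FirstOrder.Language} (A : Type*) [L.Structure A]
    (α β : A → A → Prop) (hβ : IsCong L A β) :
    IsCong L A (commut L A α β) ∧
      (∀ x y u v : A, ((x, y), (u, v)) ∈ Mset L A α β →
        commut L A α β x y → commut L A α β u v) ∧
      (∀ γ : A → A → Prop, IsCong L A γ →
        (∀ x y u v : A, ((x, y), (u, v)) ∈ Mset L A α β → γ x y → γ u v) →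
        ∀ x y : A, commut L A α β x y → γ x y) :=
  ⟨isCong_commut,
    fun _ _ _ _ hm hxy δ hδ htc => htc.rel_of_mem_Mset hβ.1.refl hm (hxy δ hδ htc),
    fun γ hγ hM _ _ hxy => hxy γ hγ (termCond_of_Mset_closed hM)⟩

theorem stmt10 {L : FirstOrder.Language} [L.IsAlgebraic] (A : Type*) [L.Structure A]
    (α β : A → A → Prop) (hα : IsCong L A α) (hβ : IsCong L A β) :
    IsCong L A (commut L A α β) ∧
      (∀ x y u v : A, ((x, y), (u, v)) ∈ Mset L A α β →
        commut L A α β x y → commut L A α β u v) ∧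
      (∀ γ : A → A → Prop, IsCong L A γ →
        (∀ x y u v : A, ((x, y), (u, v)) ∈ Mset L A α β → γ x y → γ u v) →
        ∀ x y : A, commut L A α β x y → γ x y) :=
  stmt10_general A α β hβ
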